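/- Let Γ be a subgroup of SL(2,ℝ) and let g be an element of the commensurator of Γ in SL(2,ℝ), i.e. gΓg⁻¹ is commensurable with Γ. Then g is an automorphism of ax(Γ): the pointwise image { g • P : P ∈ ax(Γ) } equals ax(Γ). In other words, Comm(Γ) is contained in Aut(ax(Γ)). -/

import Mathlib

open UpperHalfPlane Matrix MatrixGroups Pointwise

/-- The axis of an element `γ` of `SL(2, ℝ)`: the set of points of the upper half-plane
at which the displacement function `z ↦ dist z (γ • z)` attains its infimum over `ℍ`. -/
noncomputable def axis (γ : SL(2, ℝ)) : Set ℍ :=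
  {z : ℍ | ∀ w : ℍ, dist z (γ • z) ≤ dist w (γ • w)}

/-- The set of axes of the hyperbolic elements of a subgroup `Γ` of `SL(2, ℝ)`. -/
noncomputable def axes (Γ : Subgroup SL(2, ℝ)) : Set (Set ℍ) :=
  {P : Set ℍ | ∃ γ ∈ Γ, ((γ : Matrix (Fin 2) (Fin 2) ℝ).trace) ^ 2 > 4 ∧ P = axis γ}

/-!
The displacement of `M ∈ SL(2, ℝ)` is explicit:
`cosh d(z, M z) = 1 + ((F_M z / Im z)² + tr(M)² - 4) / 2`, where `F_M` depends linearly on the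
entries `c, d - a, b` of `M` only. Hence `ax(M)` is determined by `F_M` up to a nonzero factor.
By Cayley–Hamilton, `Mⁿ = pₙ M + qₙ` with `|pₙ|` strictly increasing when `|tr M| > 2`, so a
hyperbolic element and its nonzero powers have the same axis, and the powers are hyperbolic.
Since `g` acts by isometries, `ax(g γ g⁻¹) = g • ax(γ)`. Finally, if `Λ ∩ Γ` has finite index in
`Λ`, every element of `Λ` has a nonzero power in `Γ`, so `ax(Λ) ⊆ ax(Γ)`; applied both ways to
`Λ = g Γ g⁻¹` this gives `g • ax(Γ) = ax(g Γ g⁻¹) = ax(Γ)`.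
-/

section
variable {R : Type*} [CommRing R]

/-- `powCoeff t (n + 1) = Uₙ(t / 2)`, a rescaled Chebyshev polynomial of the second kind. -/
def powCoeff (t : R) : ℕ → R
  | 0 => 0
  | 1 => 1
  | n + 2 => t * powCoeff t (n + 1) - powCoeff t n

lemma Matrix.sq_fin_two (A : Matrix (Fin 2) (Fin 2) R) : A ^ 2 = A.trace • A - A.det • 1 := by
  nontriviality R
  have h := A.aeval_self_charpoly
  simp only [charpoly_fin_two, map_add, Polynomial.aeval_sub, map_pow, Polynomial.aeval_X,
    map_mul, Polynomial.aeval_C] at h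
  rw [← sub_eq_zero, ← h, Algebra.smul_def, Algebra.smul_def, mul_one]
  abel

lemma Matrix.pow_succ_fin_two_of_det_eq_one {A : Matrix (Fin 2) (Fin 2) R} (hA : A.det = 1) :
    ∀ n : ℕ, A ^ (n + 1) = powCoeff A.trace (n + 1) • A - powCoeff A.trace n • 1
  | 0 => by simp [powCoeff]
  | n + 1 => by
    rw [pow_succ, pow_succ_fin_two_of_det_eq_one hA n, sub_mul, smul_mul_assoc, smul_mul_assoc,
      ← sq, sq_fin_two, hA, one_mul, powCoeff]
    module

lemma Matrix.discr_smul_add_smul_one (A : Matrix (Fin 2) (Fin 2) R) (p q : R) :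
    (p • A + q • 1).discr = p ^ 2 * A.discr := by
  simp only [discr_fin_two, trace_fin_two, det_fin_two, add_apply, smul_apply, smul_eq_mul,
    one_apply_eq, one_apply_ne zero_ne_one, one_apply_ne one_ne_zero, mul_one, mul_zero, add_zero]
  ring

end

namespace Matrix.SpecialLinearGroup

lemma discr_coe_fin_two {R : Type*} [CommRing R] (A : SL(2, R)) :
    (A : Matrix (Fin 2) (Fin 2) R).discr = (A : Matrix (Fin 2) (Fin 2) R).trace ^ 2 - 4 := by
  rw [discr_fin_two, det_coe, mul_one]

lemma trace_coe_conj {n R : Type*} [Fintype n] [DecidableEq n] [CommRing R]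
    (g A : SpecialLinearGroup n R) :
    (MulAut.conj g A : Matrix n n R).trace = (A : Matrix n n R).trace := by
  rw [MulAut.conj_apply, coe_mul, coe_mul, trace_mul_cycle, ← coe_mul, inv_mul_cancel, coe_one,
    one_mul]

end Matrix.SpecialLinearGroup

lemma abs_powCoeff_lt_succ {t : ℝ} (ht : 2 < |t|) :
    ∀ n : ℕ, |powCoeff t n| < |powCoeff t (n + 1)|
  | 0 => by simp [powCoeff]
  | n + 1 => by
    have ih := abs_powCoeff_lt_succ ht n
    have hpos : 0 < |powCoeff t (n + 1)| := (abs_nonneg _).trans_lt ih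
    calc |powCoeff t (n + 1)| < |t| * |powCoeff t (n + 1)| - |powCoeff t n| := by nlinarith
      _ ≤ |powCoeff t (n + 2)| := by
        rw [powCoeff, ← abs_mul]; exact abs_sub_abs_le_abs_sub _ _

lemma powCoeff_ne_zero {t : ℝ} (ht : 2 < |t|) {n : ℕ} (hn : n ≠ 0) : powCoeff t n ≠ 0 := by
  obtain ⟨m, rfl⟩ := Nat.exists_eq_add_one_of_ne_zero hn
  exact abs_pos.mp ((abs_nonneg _).trans_lt (abs_powCoeff_lt_succ ht m))

/-- For hyperbolic `A`, `axisForm A z = 0` is the geodesic joining the fixed points of `A` in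
`ℝ ∪ {∞}`, the roots of `c x² + (d - a) x - b`. -/
noncomputable def axisForm (A : Matrix (Fin 2) (Fin 2) ℝ) (z : ℍ) : ℝ :=
  A 1 0 * (z.re ^ 2 + z.im ^ 2) + (A 1 1 - A 0 0) * z.re - A 0 1

lemma axisForm_smul_add_smul_one (A : Matrix (Fin 2) (Fin 2) ℝ) (p q : ℝ) (z : ℍ) :
    axisForm (p • A + q • 1) z = p * axisForm A z := by
  simp only [axisForm, Matrix.add_apply, Matrix.smul_apply, smul_eq_mul, one_apply_eq,
    one_apply_ne zero_ne_one, one_apply_ne one_ne_zero, mul_one, mul_zero, add_zero]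
  ring

lemma UpperHalfPlane.im_specialLinearGroup_smul (M : SL(2, ℝ)) (z : ℍ) :
    (M • z).im = z.im / Complex.normSq (M 1 0 * z + M 1 1) := by
  rw [MulAction.compHom_smul_def, im_smul_eq_div_normSq]
  simp [denom]

lemma cosh_dist_smul_self (M : SL(2, ℝ)) (z : ℍ) :
    Real.cosh (dist z (M • z)) =
      1 + ((axisForm M z / z.im) ^ 2 + (M : Matrix (Fin 2) (Fin 2) ℝ).discr) / 2 := by
  have hD : (M 1 0 * z + M 1 1 : ℂ) ≠ 0 := by
    simpa [denom] using denom_ne_zero (SpecialLinearGroup.mapGL ℝ M) z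
  have hsub : (z : ℂ) - ↑(M • z) =
      (M 1 0 * z ^ 2 + (M 1 1 - M 0 0) * z - M 0 1) / (M 1 0 * z + M 1 1) := by
    rw [coe_specialLinearGroup_apply]
    simp only [Algebra.algebraMap_self, RingHom.id_apply]
    rw [eq_div_iff hD, sub_mul, div_mul_cancel₀ _ hD]
    ring
  have hnormSq : Complex.normSq (M 1 0 * z ^ 2 + (M 1 1 - M 0 0) * z - M 0 1 : ℂ) =
      axisForm M z ^ 2 + (M : Matrix (Fin 2) (Fin 2) ℝ).discr * z.im ^ 2 := by
    rw [discr_fin_two, trace_fin_two, det_fin_two]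
    simp only [axisForm, sq, Complex.normSq_apply, Complex.sub_re, Complex.add_re, Complex.mul_re,
      Complex.ofReal_re, Complex.ofReal_im, Complex.sub_im, Complex.add_im, Complex.mul_im, coe_re,
      coe_im]
    ring
  rw [cosh_dist, im_specialLinearGroup_smul, Complex.dist_eq, hsub, ← Complex.normSq_eq_norm_sq,
    Complex.normSq_div, hnormSq]
  have hz := z.im_pos
  have hDpos := Complex.normSq_pos.mpr hD
  field_simp

lemma dist_smul_self_le_iff (M : SL(2, ℝ)) (z w : ℍ) :
    dist z (M • z) ≤ dist w (M • w) ↔ (axisForm M z / z.im) ^ 2 ≤ (axisForm M w / w.im) ^ 2 := by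
  rw [← abs_of_nonneg (dist_nonneg (x := z)), ← abs_of_nonneg (dist_nonneg (x := w)),
    ← Real.cosh_le_cosh, cosh_dist_smul_self, cosh_dist_smul_self]
  constructor <;> intro h <;> linarith

lemma axis_eq_of_axisForm_eq_mul {M N : SL(2, ℝ)} {p : ℝ} (hp : p ≠ 0)
    (h : ∀ z, axisForm N z = p * axisForm M z) : axis N = axis M := by
  ext z
  simp only [axis, Set.mem_ofPred_eq, dist_smul_self_le_iff, h, mul_div_assoc, mul_pow,
    mul_le_mul_iff_right₀ (pow_pos (abs_pos.mpr hp) 2 |>.trans_eq (sq_abs p))]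

lemma exists_coe_pow_eq_smul_add_smul_one {γ : SL(2, ℝ)}
    (hγ : 4 < (γ : Matrix (Fin 2) (Fin 2) ℝ).trace ^ 2) {n : ℕ} (hn : n ≠ 0) :
    ∃ p q : ℝ, p ≠ 0 ∧
      ((γ ^ n : SL(2, ℝ)) : Matrix (Fin 2) (Fin 2) ℝ) =
        p • (γ : Matrix (Fin 2) (Fin 2) ℝ) + q • 1 := by
  obtain ⟨m, rfl⟩ := Nat.exists_eq_add_one_of_ne_zero hn
  have ht : 2 < |(γ : Matrix (Fin 2) (Fin 2) ℝ).trace| := by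
    simpa using sq_lt_sq.mp (by linarith : (2 : ℝ) ^ 2 < _)
  refine ⟨powCoeff (γ : Matrix (Fin 2) (Fin 2) ℝ).trace (m + 1),
    -powCoeff (γ : Matrix (Fin 2) (Fin 2) ℝ).trace m, powCoeff_ne_zero ht m.succ_ne_zero, ?_⟩
  rw [Matrix.SpecialLinearGroup.coe_pow, pow_succ_fin_two_of_det_eq_one γ.2 m]
  module

lemma four_lt_trace_pow_sq {γ : SL(2, ℝ)} (hγ : 4 < (γ : Matrix (Fin 2) (Fin 2) ℝ).trace ^ 2)
    {n : ℕ} (hn : n ≠ 0) : 4 < ((γ ^ n : SL(2, ℝ)) : Matrix (Fin 2) (Fin 2) ℝ).trace ^ 2 := by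
  obtain ⟨p, q, hp, hpow⟩ := exists_coe_pow_eq_smul_add_smul_one hγ hn
  have hdiscr := congrArg Matrix.discr hpow
  rw [discr_smul_add_smul_one, SpecialLinearGroup.discr_coe_fin_two,
    SpecialLinearGroup.discr_coe_fin_two] at hdiscr
  nlinarith [pow_pos (abs_pos.mpr hp) 2, sq_abs p]

lemma axis_pow {γ : SL(2, ℝ)} (hγ : 4 < (γ : Matrix (Fin 2) (Fin 2) ℝ).trace ^ 2)
    {n : ℕ} (hn : n ≠ 0) : axis (γ ^ n) = axis γ := by
  obtain ⟨p, q, hp, hpow⟩ := exists_coe_pow_eq_smul_add_smul_one hγ hn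
  exact axis_eq_of_axisForm_eq_mul hp fun z => hpow ▸ axisForm_smul_add_smul_one _ p q z

lemma axis_conj (g γ : SL(2, ℝ)) : axis (MulAut.conj g γ) = g • axis γ := by
  ext z
  have hdist : ∀ w : ℍ, dist w (MulAut.conj g γ • w) = dist (g⁻¹ • w) (γ • g⁻¹ • w) := fun w => by
    rw [MulAut.conj_apply, mul_smul, mul_smul, ← dist_smul g (g⁻¹ • w), smul_inv_smul]
  simp only [axis, Set.mem_smul_set_iff_inv_smul_mem, Set.mem_ofPred_eq, hdist]
  exact ⟨fun hz w => by simpa using hz (g • w), fun hz w => hz (g⁻¹ • w)⟩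

lemma axes_map_conj (Γ : Subgroup SL(2, ℝ)) (g : SL(2, ℝ)) :
    axes (Γ.map (MulAut.conj g).toMonoidHom) = (fun P : Set ℍ => g • P) '' axes Γ := by
  ext P
  simp only [axes, Subgroup.mem_map, Set.mem_image, Set.mem_ofPred_eq,
    MulEquiv.toMonoidHom_eq_coe, MonoidHom.coe_coe]
  constructor
  · rintro ⟨_, ⟨γ, hγ, rfl⟩, htr, rfl⟩
    rw [SpecialLinearGroup.trace_coe_conj] at htr
    exact ⟨axis γ, ⟨γ, hγ, htr, rfl⟩, (axis_conj g γ).symm⟩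
  · rintro ⟨_, ⟨γ, hγ, htr, rfl⟩, rfl⟩
    refine ⟨_, ⟨γ, hγ, rfl⟩, ?_, (axis_conj g γ).symm⟩
    rwa [SpecialLinearGroup.trace_coe_conj]

lemma axes_subset_of_relIndex_ne_zero {Γ Λ : Subgroup SL(2, ℝ)} (h : Γ.relIndex Λ ≠ 0) :
    axes Λ ⊆ axes Γ := by
  rintro _ ⟨γ, hγ, htr, rfl⟩
  obtain ⟨n, hn, -, hpow⟩ := Subgroup.exists_pow_mem_of_relIndex_ne_zero h hγ
  exact ⟨γ ^ n, hpow.1, four_lt_trace_pow_sq htr hn.ne', (axis_pow htr hn.ne').symm⟩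

lemma axes_eq_of_commensurable {Γ Λ : Subgroup SL(2, ℝ)} (h : Γ.Commensurable Λ) :
    axes Γ = axes Λ :=
  (axes_subset_of_relIndex_ne_zero h.2).antisymm (axes_subset_of_relIndex_ne_zero h.1)

/-- Any element of the commensurator of `Γ` in `SL(2, ℝ)` is an automorphism of
`ax(Γ)`: `Comm(Γ) ⊆ Aut(ax(Γ))`. -/
theorem commensurator_subset_aut_axes (Γ : Subgroup SL(2, ℝ)) (g : SL(2, ℝ))
    (hg : Subgroup.Commensurable (Γ.map (MulAut.conj g).toMonoidHom) Γ) :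
    (fun P : Set ℍ => g • P) '' axes Γ = axes Γ := by
  rw [← axes_map_conj]
  exact axes_eq_of_commensurable hg
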